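/- Let n ≥ 2 be an integer and define u : ℂⁿ → ℝ by u(z₁, …, zₙ) = n^{2/n} · (1 + |z₁|² + ⋯ + |z_{n−1}|²) · |zₙ|^{2/n}. Then at every point z ∈ ℂⁿ with zₙ ≠ 0, u is smooth in a neighborhood of z, the complex Hessian matrix (∂²u/∂zᵢ∂z̄ⱼ(z))_{1≤i,j≤n} is Hermitian positive definite, and its determinant equals 1. -/

import Mathlib

/-!
Write `u = c (1 + ∑_{k ≠ L} |z_k|²) |z_L|^{2a}`. Off `{z_L = 0}` the Leibniz and chain rules for
Wirtinger derivatives give the complex Hessian explicitly: `c |z_L|^{2a} δᵢⱼ` for `i, j ≠ L`,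
`c a |z_L|^{2a-2} z̄ᵢ z_L` in column `L` (and its conjugate in row `L`), and
`c a² (1 + ∑_{k ≠ L} |z_k|²) |z_L|^{2a-2}` in the corner. Completing the square in `z_L` factors it
as `Eᴴ D E`, where `E` is the identity plus the column `vₖ = a · conj (zₖ / z_L)` in place `L` and
`D = diag (c |z_L|^{2a}, …, c |z_L|^{2a}, c a² |z_L|^{2a-2})`. Since `det E = 1`, the Hessian is
positive definite for `c > 0`, `a ≠ 0`, and its determinant is `cⁿ a² |z_L|^{2na-2}`, which is `1`
for `c = n^{2/n}`, `a = 1/n`.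
-/

open scoped ComplexOrder

/-- The Wirtinger derivative `∂f/∂zᵢ = (∂f/∂xᵢ − √−1 ∂f/∂yᵢ)/2` of
`f : ℂⁿ → ℂ` at `z`, computed via the real Fréchet derivative. -/
noncomputable def wirtingerDZ {n : ℕ} (f : (Fin n → ℂ) → ℂ) (i : Fin n) (z : Fin n → ℂ) : ℂ :=
  ((fderiv ℝ f z) (Pi.single i 1) - Complex.I * (fderiv ℝ f z) (Pi.single i Complex.I)) / 2

/-- The conjugate Wirtinger derivative `∂f/∂z̄ᵢ = (∂f/∂xᵢ + √−1 ∂f/∂yᵢ)/2` of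
`f : ℂⁿ → ℂ` at `z`, computed via the real Fréchet derivative. -/
noncomputable def wirtingerDZBar {n : ℕ} (f : (Fin n → ℂ) → ℂ) (i : Fin n) (z : Fin n → ℂ) : ℂ :=
  ((fderiv ℝ f z) (Pi.single i 1) + Complex.I * (fderiv ℝ f z) (Pi.single i Complex.I)) / 2

open Complex Filter Finset
open scoped Topology ComplexConjugate

@[fun_prop]
theorem DifferentiableAt.ofReal_comp {E : Type*} [NormedAddCommGroup E] [NormedSpace ℝ E]
    {f : E → ℝ} {x : E} (hf : DifferentiableAt ℝ f x) :
    DifferentiableAt ℝ (fun y => (f y : ℂ)) x :=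
  ofRealCLM.differentiableAt.comp x hf

@[fun_prop]
theorem DifferentiableAt.norm_sq_complex {E : Type*} [NormedAddCommGroup E] [NormedSpace ℝ E]
    {f : E → ℂ} {x : E} (hf : DifferentiableAt ℝ f x) :
    DifferentiableAt ℝ (fun y => ‖f y‖ ^ 2) x :=
  hf.norm_sq ℝ

section Wirtinger

variable {n : ℕ} {f g : (Fin n → ℂ) → ℂ} {i : Fin n} {z : Fin n → ℂ}

theorem Filter.EventuallyEq.wirtingerDZ_eq (h : f =ᶠ[𝓝 z] g) :
    wirtingerDZ f i z = wirtingerDZ g i z := by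
  simp only [wirtingerDZ, h.fderiv_eq]

theorem wirtingerDZ_const_add (c : ℂ) : wirtingerDZ (fun w => c + f w) i z = wirtingerDZ f i z := by
  simp only [wirtingerDZ, fderiv_const_add]

theorem wirtingerDZBar_const_add (c : ℂ) :
    wirtingerDZBar (fun w => c + f w) i z = wirtingerDZBar f i z := by
  simp only [wirtingerDZBar, fderiv_const_add]

theorem wirtingerDZ_mul (hf : DifferentiableAt ℝ f z) (hg : DifferentiableAt ℝ g z) :
    wirtingerDZ (fun w => f w * g w) i z = f z * wirtingerDZ g i z + g z * wirtingerDZ f i z := by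
  simp only [wirtingerDZ, fderiv_fun_mul hf hg, add_apply, smul_apply, smul_eq_mul]
  ring

theorem wirtingerDZBar_mul (hf : DifferentiableAt ℝ f z) (hg : DifferentiableAt ℝ g z) :
    wirtingerDZBar (fun w => f w * g w) i z =
      f z * wirtingerDZBar g i z + g z * wirtingerDZBar f i z := by
  simp only [wirtingerDZBar, fderiv_fun_mul hf hg, add_apply, smul_apply, smul_eq_mul]
  ring

theorem wirtingerDZ_const_mul (c : ℂ) (hf : DifferentiableAt ℝ f z) :
    wirtingerDZ (fun w => c * f w) i z = c * wirtingerDZ f i z := by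
  simp only [wirtingerDZ, fderiv_const_mul hf, smul_apply, smul_eq_mul]
  ring

theorem wirtingerDZBar_const_mul (c : ℂ) (hf : DifferentiableAt ℝ f z) :
    wirtingerDZBar (fun w => c * f w) i z = c * wirtingerDZBar f i z := by
  simp only [wirtingerDZBar, fderiv_const_mul hf, smul_apply, smul_eq_mul]
  ring

theorem wirtingerDZ_sum {ι : Type*} (s : Finset ι) {F : ι → (Fin n → ℂ) → ℂ}
    (hF : ∀ k ∈ s, DifferentiableAt ℝ (F k) z) :
    wirtingerDZ (fun w => ∑ k ∈ s, F k w) i z = ∑ k ∈ s, wirtingerDZ (F k) i z := by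
  simp only [wirtingerDZ, fderiv_fun_sum hF, _root_.sum_apply, mul_sum,
    ← sum_div, sum_sub_distrib]

theorem wirtingerDZBar_sum {ι : Type*} (s : Finset ι) {F : ι → (Fin n → ℂ) → ℂ}
    (hF : ∀ k ∈ s, DifferentiableAt ℝ (F k) z) :
    wirtingerDZBar (fun w => ∑ k ∈ s, F k w) i z = ∑ k ∈ s, wirtingerDZBar (F k) i z := by
  simp only [wirtingerDZBar, fderiv_fun_sum hF, _root_.sum_apply, mul_sum,
    ← sum_div, sum_add_distrib]

theorem wirtingerDZ_apply (j : Fin n) :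
    wirtingerDZ (fun w => w j) i z = if i = j then 1 else 0 := by
  rw [wirtingerDZ, (hasFDerivAt_apply j z).fderiv]
  rcases eq_or_ne i j with rfl | h <;> simp [*]

theorem wirtingerDZBar_apply (j : Fin n) : wirtingerDZBar (fun w => w j) i z = 0 := by
  rw [wirtingerDZBar, (hasFDerivAt_apply j z).fderiv]
  rcases eq_or_ne i j with rfl | h <;> simp [*]

theorem wirtingerDZ_conj_apply (j : Fin n) :
    wirtingerDZ (fun w => conj (w j)) i z = 0 := by
  have : HasFDerivAt (fun w : Fin n → ℂ => conj (w j))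
      (conjCLE.toContinuousLinearMap.comp (ContinuousLinearMap.proj j)) z :=
    conjCLE.hasFDerivAt.comp z (hasFDerivAt_apply j z)
  rw [wirtingerDZ, this.fderiv]
  rcases eq_or_ne i j with rfl | h <;> simp [*]

theorem wirtingerDZBar_conj_apply (j : Fin n) :
    wirtingerDZBar (fun w => conj (w j)) i z = if i = j then 1 else 0 := by
  have : HasFDerivAt (fun w : Fin n → ℂ => conj (w j))
      (conjCLE.toContinuousLinearMap.comp (ContinuousLinearMap.proj j)) z :=
    conjCLE.hasFDerivAt.comp z (hasFDerivAt_apply j z)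
  rw [wirtingerDZBar, this.fderiv]
  rcases eq_or_ne i j with rfl | h <;> simp [*]

theorem wirtingerDZ_ofReal_comp {φ : ℝ → ℝ} {φ' : ℝ} {h : (Fin n → ℂ) → ℝ}
    (hφ : HasDerivAt φ φ' (h z)) (hh : DifferentiableAt ℝ h z) :
    wirtingerDZ (fun w => (φ (h w) : ℂ)) i z = φ' * wirtingerDZ (fun w => (h w : ℂ)) i z := by
  have hφh : HasFDerivAt (fun w => (φ (h w) : ℂ)) _ z :=
    ofRealCLM.hasFDerivAt.comp z (hφ.hasFDerivAt.comp z hh.hasFDerivAt)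
  have hh' : HasFDerivAt (fun w => (h w : ℂ)) _ z := ofRealCLM.hasFDerivAt.comp z hh.hasFDerivAt
  simp only [wirtingerDZ, hφh.fderiv, hh'.fderiv, ContinuousLinearMap.comp_apply,
    ContinuousLinearMap.toSpanSingleton_apply, smul_eq_mul, ofRealCLM_apply, ofReal_mul]
  ring

theorem wirtingerDZBar_ofReal_comp {φ : ℝ → ℝ} {φ' : ℝ} {h : (Fin n → ℂ) → ℝ}
    (hφ : HasDerivAt φ φ' (h z)) (hh : DifferentiableAt ℝ h z) :
    wirtingerDZBar (fun w => (φ (h w) : ℂ)) i z = φ' * wirtingerDZBar (fun w => (h w : ℂ)) i z := by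
  have hφh : HasFDerivAt (fun w => (φ (h w) : ℂ)) _ z :=
    ofRealCLM.hasFDerivAt.comp z (hφ.hasFDerivAt.comp z hh.hasFDerivAt)
  have hh' : HasFDerivAt (fun w => (h w : ℂ)) _ z := ofRealCLM.hasFDerivAt.comp z hh.hasFDerivAt
  simp only [wirtingerDZBar, hφh.fderiv, hh'.fderiv, ContinuousLinearMap.comp_apply,
    ContinuousLinearMap.toSpanSingleton_apply, smul_eq_mul, ofRealCLM_apply, ofReal_mul]
  ring

theorem wirtingerDZ_norm_sq_apply (j : Fin n) :
    wirtingerDZ (fun w => ((‖w j‖ ^ 2 : ℝ) : ℂ)) i z = if i = j then conj (z j) else 0 := by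
  simp_rw [ofReal_pow, ← mul_conj']
  rw [wirtingerDZ_mul (by fun_prop) (by fun_prop), wirtingerDZ_apply, wirtingerDZ_conj_apply]
  simp

theorem wirtingerDZBar_norm_sq_apply (j : Fin n) :
    wirtingerDZBar (fun w => ((‖w j‖ ^ 2 : ℝ) : ℂ)) i z = if i = j then z j else 0 := by
  simp_rw [ofReal_pow, ← mul_conj']
  rw [wirtingerDZBar_mul (by fun_prop) (by fun_prop), wirtingerDZBar_apply,
    wirtingerDZBar_conj_apply]
  simp

theorem wirtingerDZ_sum_norm_sq (s : Finset (Fin n)) :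
    wirtingerDZ (fun w => ((∑ k ∈ s, ‖w k‖ ^ 2 : ℝ) : ℂ)) i z =
      if i ∈ s then conj (z i) else 0 := by
  simp_rw [ofReal_sum]
  rw [wirtingerDZ_sum s (fun k _ => by fun_prop)]
  simp only [wirtingerDZ_norm_sq_apply, sum_ite_eq]

theorem wirtingerDZBar_sum_norm_sq (s : Finset (Fin n)) :
    wirtingerDZBar (fun w => ((∑ k ∈ s, ‖w k‖ ^ 2 : ℝ) : ℂ)) i z =
      if i ∈ s then z i else 0 := by
  simp_rw [ofReal_sum]
  rw [wirtingerDZBar_sum s (fun k _ => by fun_prop)]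
  simp only [wirtingerDZBar_norm_sq_apply, sum_ite_eq]

theorem wirtingerDZ_norm_sq_rpow {j : Fin n} (hz : z j ≠ 0) (b : ℝ) :
    wirtingerDZ (fun w => (((‖w j‖ ^ 2) ^ b : ℝ) : ℂ)) i z =
      (b * (‖z j‖ ^ 2) ^ (b - 1) : ℝ) * if i = j then conj (z j) else 0 := by
  rw [wirtingerDZ_ofReal_comp (h := fun w => ‖w j‖ ^ 2)
    (Real.hasDerivAt_rpow_const (Or.inl (by positivity))) (by fun_prop),
    wirtingerDZ_norm_sq_apply]

theorem wirtingerDZBar_norm_sq_rpow {j : Fin n} (hz : z j ≠ 0) (b : ℝ) :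
    wirtingerDZBar (fun w => (((‖w j‖ ^ 2) ^ b : ℝ) : ℂ)) i z =
      (b * (‖z j‖ ^ 2) ^ (b - 1) : ℝ) * if i = j then z j else 0 := by
  rw [wirtingerDZBar_ofReal_comp (h := fun w => ‖w j‖ ^ 2)
    (Real.hasDerivAt_rpow_const (Or.inl (by positivity))) (by fun_prop),
    wirtingerDZBar_norm_sq_apply]

end Wirtinger

section ColumnShear

open Matrix

variable {ι R : Type*} [DecidableEq ι]

def columnShear [CommRing R] (L : ι) (v : ι → R) : Matrix ι ι R :=
  1 + vecMulVec v (Pi.single L 1)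

variable {L : ι} {v : ι → R}

theorem det_columnShear [Fintype ι] [CommRing R] (hv : v L = 0) : (columnShear L v).det = 1 := by
  rw [columnShear, vecMulVec_eq Unit, Matrix.det_one_add_replicateCol_mul_replicateRow]
  simp [hv]

theorem columnShear_apply [CommRing R] (k j : ι) :
    columnShear L v k j = (if k = j then 1 else 0) + if j = L then v k else 0 := by
  simp [columnShear, one_apply, vecMulVec_apply, Pi.single_apply]

theorem conjTranspose_columnShear_mul_diagonal_mul_apply [Fintype ι] [CommRing R] [StarRing R]
    (d : ι → R) (i j : ι) :
    ((columnShear L v)ᴴ * diagonal d * columnShear L v) i j =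
      (if i = j then d i else 0) + (if j = L then d i * v i else 0) +
        (if i = L then star (v j) * d j else 0) +
        (if i = L ∧ j = L then ∑ k, star (v k) * d k * v k else 0) := by
  rw [mul_apply]
  simp_rw [mul_diagonal, conjTranspose_apply, columnShear_apply]
  by_cases hi : i = L <;> by_cases hj : j = L <;>
    simp [hi, hj, add_mul, mul_add, sum_add_distrib, ite_mul, mul_ite, eq_comm, apply_ite star]
  all_goals (try split_ifs) <;> subst_vars <;> ring

theorem posDef_conjTranspose_columnShear_mul_diagonal_mul [Fintype ι] [Field R] [PartialOrder R]
    [StarRing R] [StarOrderedRing R] {d : ι → R} (hv : v L = 0) (hd : ∀ k, 0 < d k) :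
    ((columnShear L v)ᴴ * diagonal d * columnShear L v).PosDef :=
  (posDef_diagonal_iff.2 hd).conjTranspose_mul_mul_same <| mulVec_injective_iff_isUnit.2 <| by
    rw [isUnit_iff_isUnit_det, det_columnShear hv]
    exact isUnit_one

end ColumnShear

section Pogorelov

variable {n : ℕ} {c a : ℝ} {L : Fin n}

variable (c a L) in
noncomputable def pogorelovPotential (w : Fin n → ℂ) : ℝ :=
  c * (1 + ∑ k ∈ univ.erase L, ‖w k‖ ^ 2) * (‖w L‖ ^ 2) ^ a

theorem pogorelovPotential_last (h : n - 1 < n) (w : Fin n → ℂ) :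
    pogorelovPotential c a ⟨n - 1, h⟩ w =
      c * (1 + ∑ i : Fin n, if (i : ℕ) < n - 1 then ‖w i‖ ^ 2 else 0) *
        ‖w ⟨n - 1, h⟩‖ ^ (2 * a) := by
  have hsum : univ.erase (⟨n - 1, h⟩ : Fin n) = univ.filter fun i : Fin n => (i : ℕ) < n - 1 := by
    ext i
    have := i.isLt
    simp only [mem_erase, mem_filter, mem_univ, and_true, true_and, ne_eq, Fin.ext_iff]
    omega
  rw [pogorelovPotential, hsum, sum_filter, Real.rpow_mul (norm_nonneg _), Real.rpow_two]

theorem contDiffAt_pogorelovPotential {m : WithTop ℕ∞} {z : Fin n → ℂ} (hz : z L ≠ 0) :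
    ContDiffAt ℝ m (pogorelovPotential c a L) z := by
  have hsq : ∀ k, ContDiff ℝ m fun w : Fin n → ℂ => ‖w k‖ ^ 2 :=
    fun k => (contDiff_apply ℝ ℂ k).norm_sq ℝ
  have hS := ContDiffAt.sum (s := univ.erase L) fun k _ => (hsq k).contDiffAt (x := z)
  exact (contDiffAt_const.mul (contDiffAt_const.add hS)).mul
    ((hsq L).contDiffAt.rpow_const_of_ne (by positivity))

theorem wirtingerDZBar_pogorelovPotential {z : Fin n → ℂ} (hz : z L ≠ 0) (j : Fin n) :
    wirtingerDZBar (fun w => (pogorelovPotential c a L w : ℂ)) j z =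
      c * z j * (if j = L then a * (1 + ∑ k ∈ univ.erase L, ‖z k‖ ^ 2) * (‖z L‖ ^ 2) ^ (a - 1)
        else (‖z L‖ ^ 2) ^ a : ℝ) := by
  have hS : DifferentiableAt ℝ (fun w => ((1 + ∑ k ∈ univ.erase L, ‖w k‖ ^ 2 : ℝ) : ℂ)) z := by
    fun_prop
  have hP : DifferentiableAt ℝ (fun w => (((‖w L‖ ^ 2) ^ a : ℝ) : ℂ)) z := by
    fun_prop (disch := positivity)
  simp only [pogorelovPotential, ofReal_mul, mul_assoc]
  rw [wirtingerDZBar_const_mul _ (hS.fun_mul hP), wirtingerDZBar_mul hS hP,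
    wirtingerDZBar_norm_sq_rpow hz]
  simp only [ofReal_add, ofReal_one]
  rw [wirtingerDZBar_const_add, wirtingerDZBar_sum_norm_sq]
  rcases eq_or_ne j L with rfl | hj
  · simp only [↓reduceIte, mem_erase, ne_eq, not_true_eq_false, false_and]
    push_cast
    ring
  · simp only [hj, ↓reduceIte, mem_erase, ne_eq, not_false_eq_true, mem_univ,
      and_true]
    ring

variable (c a L) in
noncomputable def pogorelovHessian (z : Fin n → ℂ) : Matrix (Fin n) (Fin n) ℂ :=
  Matrix.of fun i j =>
    if j = L then
      if i = L then
        ((c * a ^ 2 * (1 + ∑ k ∈ univ.erase L, ‖z k‖ ^ 2) * (‖z L‖ ^ 2) ^ (a - 1) : ℝ) : ℂ)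
      else ((c * a * (‖z L‖ ^ 2) ^ (a - 1) : ℝ) : ℂ) * (conj (z i) * z L)
    else if i = L then ((c * a * (‖z L‖ ^ 2) ^ (a - 1) : ℝ) : ℂ) * (z j * conj (z L))
    else if i = j then ((c * (‖z L‖ ^ 2) ^ a : ℝ) : ℂ) else 0

theorem wirtingerDZ_wirtingerDZBar_pogorelovPotential {z : Fin n → ℂ} (hz : z L ≠ 0)
    (i j : Fin n) :
    wirtingerDZ (fun w => wirtingerDZBar (fun w' => (pogorelovPotential c a L w' : ℂ)) j w) i z =
      pogorelovHessian c a L z i j := by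
  have hL : ∀ᶠ w in 𝓝 z, w L ≠ 0 := (continuous_apply L).continuousAt.eventually_ne hz
  rw [Filter.EventuallyEq.wirtingerDZ_eq
    (hL.mono fun w hw => wirtingerDZBar_pogorelovPotential (c := c) (a := a) hw j),
    pogorelovHessian, Matrix.of_apply]
  rcases eq_or_ne j L with rfl | hj
  · simp only [↓reduceIte, ofReal_mul, ofReal_add, ofReal_one]
    rw [wirtingerDZ_mul (by fun_prop) (by fun_prop (disch := positivity)),
      wirtingerDZ_mul (by fun_prop) (by fun_prop (disch := positivity)),
      wirtingerDZ_const_mul _ (by fun_prop), wirtingerDZ_const_add, wirtingerDZ_sum_norm_sq,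
      wirtingerDZ_norm_sq_rpow hz, wirtingerDZ_const_mul _ (by fun_prop), wirtingerDZ_apply]
    rcases eq_or_ne i j with rfl | hij
    · have hm : (‖z i‖ ^ 2 : ℂ) = z i * conj (z i) := (mul_conj' _).symm
      have hz' : conj (z i) ≠ 0 := (map_ne_zero _).2 hz
      simp only [↓reduceIte, mem_erase, ne_eq, not_true_eq_false, false_and,
        Real.rpow_sub_one (by positivity : ‖z i‖ ^ 2 ≠ 0) (a - 1)]
      push_cast
      rw [hm]
      field_simp
      ring
    · simp only [hij, ↓reduceIte, mem_erase, ne_eq, not_false_eq_true, mem_univ, and_self,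
        mul_zero, zero_add, add_zero]
      ring
  · simp only [hj, ↓reduceIte]
    rw [wirtingerDZ_mul (by fun_prop) (by fun_prop (disch := positivity)),
      wirtingerDZ_const_mul _ (by fun_prop), wirtingerDZ_apply, wirtingerDZ_norm_sq_rpow hz]
    rcases eq_or_ne i L with rfl | hi
    · simp only [↓reduceIte, hj.symm]
      push_cast
      ring
    · rcases eq_or_ne i j with rfl | hij
      · simp only [hi, ↓reduceIte, mul_zero, mul_one, zero_add]
        push_cast
        ring
      · simp [hi, hij]

open Matrix in
theorem pogorelovHessian_eq_conjTranspose_mul_diagonal_mul {z : Fin n → ℂ} (hz : z L ≠ 0) :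
    pogorelovHessian c a L z =
      (columnShear L fun k => if k = L then 0 else a * conj (z k / z L))ᴴ *
        diagonal (fun k => ((if k = L then c * a ^ 2 * (‖z L‖ ^ 2) ^ (a - 1)
          else c * (‖z L‖ ^ 2) ^ a : ℝ) : ℂ)) *
        columnShear L fun k => if k = L then 0 else a * conj (z k / z L) := by
  have hm : (‖z L‖ ^ 2 : ℂ) = z L * conj (z L) := (mul_conj' _).symm
  have hz' : conj (z L) ≠ 0 := (map_ne_zero _).2 hz
  have hpow : (‖z L‖ ^ 2) ^ a = (‖z L‖ ^ 2) ^ (a - 1) * ‖z L‖ ^ 2 := by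
    rw [Real.rpow_sub_one (by positivity), div_mul_cancel₀ _ (by positivity)]
  ext i j
  rw [conjTranspose_columnShear_mul_diagonal_mul_apply, pogorelovHessian, of_apply]
  rcases eq_or_ne L j with rfl | hj <;> rcases eq_or_ne L i with rfl | hi
  · have hsum : ∑ k, star (if k = L then 0 else a * conj (z k / z L)) *
        (((if k = L then c * a ^ 2 * (‖z L‖ ^ 2) ^ (a - 1) else c * (‖z L‖ ^ 2) ^ a : ℝ) : ℂ)) *
        (if k = L then 0 else a * conj (z k / z L)) =
        ((c * a ^ 2 * (‖z L‖ ^ 2) ^ (a - 1) * ∑ k ∈ univ.erase L, ‖z k‖ ^ 2 : ℝ) : ℂ) := by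
      rw [← sum_erase univ (a := L) (by simp), ofReal_mul, ofReal_sum, mul_sum]
      refine sum_congr rfl fun k hk => ?_
      simp only [(mem_erase.1 hk).1, ↓reduceIte, star_mul', star_def, conj_ofReal,
        conj_conj, map_div₀, hpow]
      push_cast
      rw [hm, ← mul_conj' (z k)]
      field_simp
    simp only [↓reduceIte, and_self, hsum, star_zero]
    push_cast
    ring
  · simp only [hi.symm, ↓reduceIte, false_and, add_zero, zero_add, map_div₀, hpow]
    push_cast
    rw [hm]
    field_simp
  · simp only [hj, hj.symm, ↓reduceIte, and_false, add_zero, zero_add, star_mul', star_def,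
      conj_ofReal, conj_conj, map_div₀, hpow]
    push_cast
    rw [hm]
    field_simp
  · rcases eq_or_ne i j with rfl | hij <;> simp [*, hi.symm, hj.symm]

theorem posDef_pogorelovHessian (hc : 0 < c) (ha : a ≠ 0) {z : Fin n → ℂ} (hz : z L ≠ 0) :
    (pogorelovHessian c a L z).PosDef := by
  rw [pogorelovHessian_eq_conjTranspose_mul_diagonal_mul hz]
  refine posDef_conjTranspose_columnShear_mul_diagonal_mul (by simp) fun k => ?_
  rw [zero_lt_real]
  split_ifs <;> positivity

theorem det_pogorelovHessian {z : Fin n → ℂ} (hz : z L ≠ 0) :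
    (pogorelovHessian c a L z).det = ((c ^ n * a ^ 2 * (‖z L‖ ^ 2) ^ (n * a - 1) : ℝ) : ℂ) := by
  rw [pogorelovHessian_eq_conjTranspose_mul_diagonal_mul hz, Matrix.det_mul, Matrix.det_mul,
    Matrix.det_conjTranspose, det_columnShear (by simp), star_one, one_mul, mul_one,
    Matrix.det_diagonal, ← ofReal_prod]
  congr 1
  rw [← mul_prod_erase univ _ (mem_univ L), if_pos rfl,
    prod_congr rfl fun k hk => if_neg (mem_erase.1 hk).1, prod_const,
    card_erase_of_mem (mem_univ L), card_univ, Fintype.card_fin]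
  obtain ⟨k, rfl⟩ := Nat.exists_eq_add_of_lt L.pos
  have hm : 0 < ‖z L‖ ^ 2 := by positivity
  simp only [zero_add, add_tsub_cancel_right, Nat.cast_add, Nat.cast_one]
  rw [mul_pow, ← Real.rpow_mul_natCast hm.le, show ((k + 1 : ℝ) * a - 1) = (a - 1) + a * k by ring,
    Real.rpow_add hm]
  ring

end Pogorelov

/-- the Pogorelov-type example
`u(z) = n^{2/n}(1 + |z₁|² + ⋯ + |z_{n−1}|²)|zₙ|^{2/n}` is smooth near every point with
`zₙ ≠ 0`, and there its complex Hessian `(∂²u/∂zᵢ∂z̄ⱼ)` is Hermitian positive definite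
with determinant `1`. -/
theorem pogorelov_example (n : ℕ) (hn : 2 ≤ n)
    (u : (Fin n → ℂ) → ℝ)
    (hu : u = fun z => (n : ℝ) ^ ((2 : ℝ) / n) *
      (1 + ∑ i : Fin n, if (i : ℕ) < n - 1 then ‖z i‖ ^ 2 else 0) *
      ‖z ⟨n - 1, by omega⟩‖ ^ ((2 : ℝ) / n))
    (z : Fin n → ℂ) (hz : z ⟨n - 1, by omega⟩ ≠ 0) :
    ContDiffAt ℝ (⊤ : ℕ∞) u z ∧
    (Matrix.of fun i j : Fin n =>
        wirtingerDZ (fun w => wirtingerDZBar (fun w' => ((u w' : ℝ) : ℂ)) j w) i z).PosDef ∧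
    (Matrix.of fun i j : Fin n =>
        wirtingerDZ (fun w => wirtingerDZBar (fun w' => ((u w' : ℝ) : ℂ)) j w) i z).det = 1 := by
  have hn0 : (0 : ℝ) < n := by positivity
  have hu' : u = pogorelovPotential ((n : ℝ) ^ ((2 : ℝ) / n)) (1 / n) ⟨n - 1, by omega⟩ := by
    ext w
    rw [hu, pogorelovPotential_last, mul_one_div]
  have hHess : (Matrix.of fun i j : Fin n =>
      wirtingerDZ (fun w => wirtingerDZBar (fun w' => ((u w' : ℝ) : ℂ)) j w) i z) =
      pogorelovHessian ((n : ℝ) ^ ((2 : ℝ) / n)) (1 / n) ⟨n - 1, by omega⟩ z := by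
    ext i j
    rw [hu']
    exact wirtingerDZ_wirtingerDZBar_pogorelovPotential hz i j
  refine ⟨hu' ▸ contDiffAt_pogorelovPotential hz,
    hHess ▸ posDef_pogorelovHessian (by positivity) (by positivity) hz, ?_⟩
  rw [hHess, det_pogorelovHessian hz, ← Real.rpow_natCast, ← Real.rpow_mul hn0.le,
    div_mul_cancel₀ _ hn0.ne', mul_one_div_cancel hn0.ne', sub_self, Real.rpow_zero]
  norm_num
  field_simp
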